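/- Let μ be a Borel measure finite on dyadic cubes and {b_Q}_{Q∈𝒟} an L^∞(μ)-accretive system with adapted operators E^μ_Q and Δ^μ_Q as usual, and let 𝒮_b = {Q : b_Q ≠ b_{Q^{(1)}}·1_Q}. Then for every f ∈ L²(μ) and every dyadic cube Q, Δ^μ_Q f − (Δ^μ_Q)² f = ∑_{P ∈ ch Q ∩ 𝒮_b} φ^μ_P, where φ^μ_P = (⟨f⟩^μ_Q/⟨b_Q⟩^μ_Q)( (⟨b_Q⟩^μ_P/⟨b_P⟩^μ_P) b_P − b_Q ) 1_P, and moreover ‖φ^μ_P‖_{L²(μ)} ≤ C |⟨f⟩^μ_Q| μ(P)^{1/2} with C depending only on the accretivity constants. -/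

import Mathlib

open MeasureTheory Filter
open scoped ENNReal

/-- A dyadic cube in `ℝⁿ`, encoded by its generation `k` (side length `2 ^ k`)
and position `m` (corner at `m * 2 ^ k`). -/
structure DyadicCube (n : ℕ) where
  k : ℤ
  m : Fin n → ℤ

namespace DyadicCube

variable {n : ℕ}

/-- The underlying half-open cube in `ℝⁿ`. -/
def toSet (Q : DyadicCube n) : Set (Fin n → ℝ) :=
  {x | ∀ i, (Q.m i : ℝ) * (2 : ℝ) ^ Q.k ≤ x i ∧ x i < ((Q.m i : ℝ) + 1) * (2 : ℝ) ^ Q.k}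

/-- The side length `ℓ(Q)` of the cube. -/
noncomputable def len (Q : DyadicCube n) : ℝ := (2 : ℝ) ^ Q.k

/-- The dyadic parent `Q^{(1)}`. -/
def parent (Q : DyadicCube n) : DyadicCube n :=
  ⟨Q.k + 1, fun i => Int.fdiv (Q.m i) 2⟩

/-- The ancestor `Q^{(r)}` of order `r`. -/
def iterParent (Q : DyadicCube n) (r : ℕ) : DyadicCube n := parent^[r] Q

/-- The dyadic child of `Q` indexed by `ε : Fin n → Bool`. -/
def child (Q : DyadicCube n) (ε : Fin n → Bool) : DyadicCube n :=
  ⟨Q.k - 1, fun i => 2 * Q.m i + (if ε i then 1 else 0)⟩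

/-- The descendant of `Q` of order `r` indexed by `v`; these enumerate `ch^r Q`. -/
def childIter (Q : DyadicCube n) (r : ℕ) (v : Fin n → Fin (2 ^ r)) : DyadicCube n :=
  ⟨Q.k - r, fun i => 2 ^ r * Q.m i + ((v i : ℕ) : ℤ)⟩

end DyadicCube

variable {n : ℕ}

/-- The `μ`-average of `f` over a dyadic cube (zero when the cube is `μ`-null). -/
noncomputable def avg (μ : Measure (Fin n → ℝ)) (f : (Fin n → ℝ) → ℝ) (Q : DyadicCube n) : ℝ :=
  if μ Q.toSet = 0 then 0 else (∫ x in Q.toSet, f x ∂μ) / (μ Q.toSet).toReal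

/-- The expectation `E^b_Q f = (⟨f⟩_Q / ⟨b⟩_Q) · b · 1_Q` adapted to an accretive function `b`. -/
noncomputable def Eb (μ : Measure (Fin n → ℝ)) (b f : (Fin n → ℝ) → ℝ) (Q : DyadicCube n) :
    (Fin n → ℝ) → ℝ :=
  fun x => (avg μ f Q / avg μ b Q) * Q.toSet.indicator b x

/-- The martingale difference `Δ^b_Q f = ∑_{Q' ∈ ch Q} E^b_{Q'} f − E^b_Q f`. -/
noncomputable def Db (μ : Measure (Fin n → ℝ)) (b f : (Fin n → ℝ) → ℝ) (Q : DyadicCube n) :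
    (Fin n → ℝ) → ℝ :=
  fun x => (∑ ε : Fin n → Bool, Eb μ b f (Q.child ε) x) - Eb μ b f Q x

/-- The expectation `E^μ_Q f = (⟨f⟩_Q / ⟨b_Q⟩_Q) b_Q` adapted to an accretive system. -/
noncomputable def Esys (μ : Measure (Fin n → ℝ)) (b : DyadicCube n → (Fin n → ℝ) → ℝ)
    (f : (Fin n → ℝ) → ℝ) (Q : DyadicCube n) : (Fin n → ℝ) → ℝ :=
  fun x => (avg μ f Q / avg μ (b Q) Q) * b Q x

/-- The martingale difference `Δ^μ_Q` adapted to an accretive system. -/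
noncomputable def Dsys (μ : Measure (Fin n → ℝ)) (b : DyadicCube n → (Fin n → ℝ) → ℝ)
    (f : (Fin n → ℝ) → ℝ) (Q : DyadicCube n) : (Fin n → ℝ) → ℝ :=
  fun x => (∑ ε : Fin n → Bool, Esys μ b f (Q.child ε) x) - Esys μ b f Q x

/-- The (formal) adjoint `(Δ^μ_Q)^*`, given by its explicit formula. -/
noncomputable def DsysStar (μ : Measure (Fin n → ℝ)) (b : DyadicCube n → (Fin n → ℝ) → ℝ)
    (f : (Fin n → ℝ) → ℝ) (Q : DyadicCube n) : (Fin n → ℝ) → ℝ :=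
  fun x => ∑ ε : Fin n → Bool,
    (Q.child ε).toSet.indicator
      (fun _ => avg μ (fun y => b (Q.child ε) y * f y) (Q.child ε)
                  / avg μ (b (Q.child ε)) (Q.child ε)
                - avg μ (fun y => b Q y * f y) Q / avg μ (b Q) Q) x

/-- The set `𝒮_b` of cubes where the accretive system changes between generations. -/
def Sb (b : DyadicCube n → (Fin n → ℝ) → ℝ) : Set (DyadicCube n) :=
  {Q | b Q ≠ fun x => Q.toSet.indicator (b Q.parent) x}

/-- An `L^∞(μ)`-accretive system with constants `δ` and `C`. -/
structure AccretiveSystem (μ : Measure (Fin n → ℝ)) (b : DyadicCube n → (Fin n → ℝ) → ℝ)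
    (δ C : ℝ) : Prop where
  meas : ∀ Q : DyadicCube n, Measurable (b Q)
  supp : ∀ Q : DyadicCube n, ∀ x, x ∉ Q.toSet → b Q x = 0
  bdd : ∀ Q : DyadicCube n, eLpNorm (b Q) ∞ μ ≤ ENNReal.ofReal C
  acc : ∀ Q : DyadicCube n, δ * (μ Q.toSet).toReal ≤ |∫ x in Q.toSet, b Q x ∂μ|

/-- A family of dyadic cubes is `μ`-sparse (i.e. `μ`-Carleson) with constant `Λ`. -/
def IsSparse (μ : Measure (Fin n → ℝ)) (S : Set (DyadicCube n)) (Λ : ℝ≥0∞) : Prop :=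
  ∀ R : DyadicCube n,
    ∑' Q : {Q : DyadicCube n // Q ∈ S ∧ Q.toSet ⊆ R.toSet}, μ Q.1.toSet ≤ Λ * μ R.toSet

/-!
Write `g = Δ_Q f`. Since `E_P` preserves the `μ`-average on `P`, `∫_Q g = 0`, so `E_Q g = 0` and
`Δ_Q g = ∑_P E_P g`. On a child `P` the average of `g` is `⟨f⟩_P - (⟨f⟩_Q/⟨b_Q⟩_Q) ⟨b_Q⟩_P`, hence
`E_P f - E_P g = (⟨f⟩_Q/⟨b_Q⟩_Q)(⟨b_Q⟩_P/⟨b_P⟩_P) b_P`; splitting `b_Q = ∑_P 1_P b_Q` gives the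
formula. For `P ∉ 𝒮_b` we have `b_P = 1_P b_Q`, so `φ_P = 0`. The `L²` bound comes from
`|⟨f⟩_Q/⟨b_Q⟩_Q| ≤ |⟨f⟩_Q|/δ`, `|⟨b_Q⟩_P/⟨b_P⟩_P| ≤ C/δ` and `‖b_R‖_∞ ≤ C`.
-/

namespace DyadicCube

lemma parent_child (Q : DyadicCube n) (ε : Fin n → Bool) : (Q.child ε).parent = Q := by
  cases Q with
  | mk k m =>
    simp only [child, parent, mk.injEq, sub_add_cancel, true_and]
    funext i
    rw [Int.fdiv_eq_ediv_of_nonneg _ (by norm_num)]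
    cases ε i
    · simp
    · simp; omega

lemma measurableSet_toSet (Q : DyadicCube n) : MeasurableSet Q.toSet := by
  have : Q.toSet = Set.univ.pi fun i =>
      Set.Ico ((Q.m i : ℝ) * (2 : ℝ) ^ Q.k) (((Q.m i : ℝ) + 1) * (2 : ℝ) ^ Q.k) := by
    ext x; simp [toSet, Set.mem_Ico]
  rw [this]
  exact MeasurableSet.univ_pi fun _ => measurableSet_Ico

lemma mem_child_iff (Q : DyadicCube n) (ε : Fin n → Bool) (x : Fin n → ℝ) :
    x ∈ (Q.child ε).toSet ↔ ∀ i,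
      (2 * Q.m i + (if ε i then 1 else 0) : ℝ) * (2 : ℝ) ^ (Q.k - 1) ≤ x i ∧
      x i < (2 * Q.m i + (if ε i then 1 else 0) + 1 : ℝ) * (2 : ℝ) ^ (Q.k - 1) := by
  simp only [child, toSet, Set.mem_ofPred_eq]
  refine forall_congr' fun i => ?_
  split_ifs <;> push_cast <;> rfl

lemma two_zpow_eq_two_mul (k : ℤ) : (2 : ℝ) ^ k = 2 * (2 : ℝ) ^ (k - 1) := by
  rw [← zpow_one_add₀ two_ne_zero]; ring_nf

lemma child_subset (Q : DyadicCube n) (ε : Fin n → Bool) : (Q.child ε).toSet ⊆ Q.toSet := by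
  intro x hx i
  obtain ⟨h₁, h₂⟩ := (Q.mem_child_iff ε x).1 hx i
  have h := zpow_pos (two_pos (α := ℝ)) (Q.k - 1)
  rw [two_zpow_eq_two_mul]
  constructor <;> split_ifs at h₁ h₂ <;> nlinarith

lemma pairwise_disjoint_child (Q : DyadicCube n) :
    Pairwise fun ε ε' => Disjoint (Q.child ε).toSet (Q.child ε').toSet := by
  intro ε ε' hne
  refine Set.disjoint_left.2 fun x hx hx' => ?_
  obtain ⟨i, hi⟩ := Function.ne_iff.1 hne
  obtain ⟨h₁, h₂⟩ := (Q.mem_child_iff ε x).1 hx i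
  obtain ⟨h₁', h₂'⟩ := (Q.mem_child_iff ε' x).1 hx' i
  have h := zpow_pos (two_pos (α := ℝ)) (Q.k - 1)
  cases hε : ε i <;> cases hε' : ε' i <;> simp only [hε, hε'] at hi h₁ h₂ h₁' h₂' <;>
    simp at hi h₁ h₂ h₁' h₂' <;> nlinarith

lemma exists_mem_child (Q : DyadicCube n) {x : Fin n → ℝ} (hx : x ∈ Q.toSet) :
    ∃ ε, x ∈ (Q.child ε).toSet := by
  refine ⟨fun i => decide ((2 * Q.m i + 1 : ℝ) * (2 : ℝ) ^ (Q.k - 1) ≤ x i),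
    (Q.mem_child_iff _ x).2 fun i => ?_⟩
  obtain ⟨h₁, h₂⟩ := hx i
  rw [two_zpow_eq_two_mul] at h₁ h₂
  split_ifs with h <;> simp only [decide_eq_true_eq] at h <;> constructor <;> nlinarith

lemma iUnion_child (Q : DyadicCube n) : ⋃ ε, (Q.child ε).toSet = Q.toSet :=
  Set.iUnion_subset_iff.2 Q.child_subset |>.antisymm fun _ hx =>
    Set.mem_iUnion.2 (Q.exists_mem_child hx)

lemma sum_indicator_child (Q : DyadicCube n) (g : (Fin n → ℝ) → ℝ) (x : Fin n → ℝ) :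
    ∑ ε, (Q.child ε).toSet.indicator g x = Q.toSet.indicator g x := by
  rw [← Q.iUnion_child, indicator_iUnion_of_pairwise_disjoint _ Q.pairwise_disjoint_child]
  exact (tsum_fintype _).symm

end DyadicCube

lemma MeasureTheory.MemLp.integrableOn_of_measure_ne_top {α : Type*} [MeasurableSpace α]
    {μ : Measure α} {p : ℝ≥0∞} {f : α → ℝ} (hf : MemLp f p μ) (hp : 1 ≤ p) {s : Set α}
    (hs : μ s ≠ ⊤) : IntegrableOn f s μ :=
  have : IsFiniteMeasure (μ.restrict s) := isFiniteMeasure_restrict.2 hs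
  (hf.restrict s).integrable hp

lemma eLpNorm_indicator_le_of_ae_bound {α : Type*} [MeasurableSpace α] {μ : Measure α}
    {p : ℝ≥0∞} {s : Set α} (hs : MeasurableSet s) {g : α → ℝ} {M : ℝ}
    (hg : ∀ᵐ x ∂μ, x ∈ s → |g x| ≤ M) :
    eLpNorm (s.indicator g) p μ ≤ ENNReal.ofReal M * μ s ^ p.toReal⁻¹ := by
  rw [eLpNorm_indicator_eq_eLpNorm_restrict hs, mul_comm, ← Measure.restrict_apply_univ]
  exact eLpNorm_le_of_ae_bound ((ae_restrict_iff' hs).2 hg)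

section Averages

variable {μ : Measure (Fin n → ℝ)} {Q : DyadicCube n}

lemma avg_eq_div (hQ : μ Q.toSet ≠ 0) (f : (Fin n → ℝ) → ℝ) :
    avg μ f Q = (∫ x in Q.toSet, f x ∂μ) / (μ Q.toSet).toReal :=
  if_neg hQ

lemma setIntegral_eq_avg_mul (hQ : μ Q.toSet ≠ 0) (hQ' : μ Q.toSet ≠ ⊤) (f : (Fin n → ℝ) → ℝ) :
    ∫ x in Q.toSet, f x ∂μ = avg μ f Q * (μ Q.toSet).toReal := by
  rw [avg_eq_div hQ, div_mul_cancel₀ _ (ENNReal.toReal_ne_zero.2 ⟨hQ, hQ'⟩)]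

lemma avg_congr {f g : (Fin n → ℝ) → ℝ} (h : Set.EqOn f g Q.toSet) : avg μ f Q = avg μ g Q := by
  simp only [avg, setIntegral_congr_fun Q.measurableSet_toSet h]

lemma avg_const_mul (c : ℝ) (f : (Fin n → ℝ) → ℝ) :
    avg μ (fun x => c * f x) Q = c * avg μ f Q := by
  simp only [avg, integral_const_mul, mul_div_assoc, mul_ite, mul_zero]

end Averages

/-- The error term `φ^μ_P` of the paper, for the child `P = Q.child ε`. -/
noncomputable def errorTerm (μ : Measure (Fin n → ℝ)) (b : DyadicCube n → (Fin n → ℝ) → ℝ)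
    (f : (Fin n → ℝ) → ℝ) (Q : DyadicCube n) (ε : Fin n → Bool) : (Fin n → ℝ) → ℝ :=
  (Q.child ε).toSet.indicator fun y => (avg μ f Q / avg μ (b Q) Q) *
    ((avg μ (b Q) (Q.child ε) / avg μ (b (Q.child ε)) (Q.child ε)) * b (Q.child ε) y - b Q y)

namespace AccretiveSystem

variable {μ : Measure (Fin n → ℝ)} {b : DyadicCube n → (Fin n → ℝ) → ℝ} {δ C : ℝ}

lemma indicator_eq (hb : AccretiveSystem μ b δ C) (P : DyadicCube n) :
    P.toSet.indicator (b P) = b P :=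
  Set.indicator_eq_self.2 (Function.support_subset_iff'.2 (hb.supp P))

lemma memLp_top (hb : AccretiveSystem μ b δ C) (P : DyadicCube n) : MemLp (b P) ∞ μ :=
  ⟨(hb.meas P).aestronglyMeasurable, (hb.bdd P).trans_lt ENNReal.ofReal_lt_top⟩

lemma ae_abs_le (hb : AccretiveSystem μ b δ C) (hC : 0 ≤ C) (P : DyadicCube n) :
    ∀ᵐ y ∂μ, |b P y| ≤ C := by
  filter_upwards [ae_le_eLpNormEssSup (f := b P) (μ := μ)] with y hy
  rw [← eLpNorm_exponent_top] at hy
  rw [← Real.norm_eq_abs, ← ENNReal.ofReal_le_ofReal_iff hC, ofReal_norm]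
  exact hy.trans (hb.bdd P)

lemma abs_avg_le (hb : AccretiveSystem μ b δ C) (hC : 0 ≤ C) (P : DyadicCube n)
    {R : DyadicCube n} (hR : μ R.toSet ≠ ⊤) : |avg μ (b P) R| ≤ C := by
  unfold avg
  split_ifs with h0
  · simpa using hC
  · rw [abs_div, ENNReal.abs_toReal, div_le_iff₀ (ENNReal.toReal_pos h0 hR), ← Real.norm_eq_abs]
    exact norm_setIntegral_le_of_norm_le_const_ae hR.lt_top
      (ae_restrict_of_ae ((hb.ae_abs_le hC P).mono fun _ h => (Real.norm_eq_abs _).trans_le h))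

lemma le_abs_avg_self (hb : AccretiveSystem μ b δ C) {P : DyadicCube n} (h0 : μ P.toSet ≠ 0)
    (htop : μ P.toSet ≠ ⊤) : δ ≤ |avg μ (b P) P| := by
  have h := hb.acc P
  rw [setIntegral_eq_avg_mul h0 htop, abs_mul, ENNReal.abs_toReal] at h
  exact le_of_mul_le_mul_right h (ENNReal.toReal_pos h0 htop)

lemma avg_self_ne_zero (hb : AccretiveSystem μ b δ C) (hδ : 0 < δ) {P : DyadicCube n}
    (h0 : μ P.toSet ≠ 0) (htop : μ P.toSet ≠ ⊤) : avg μ (b P) P ≠ 0 :=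
  abs_pos.1 (hδ.trans_le (hb.le_abs_avg_self h0 htop))

lemma integrableOn_Esys (hb : AccretiveSystem μ b δ C) (f : (Fin n → ℝ) → ℝ) (P : DyadicCube n)
    {s : Set (Fin n → ℝ)} (hs : μ s ≠ ⊤) : IntegrableOn (Esys μ b f P) s μ :=
  ((hb.memLp_top P).integrableOn_of_measure_ne_top le_top hs).const_mul _

lemma setIntegral_Esys_of_disjoint (hb : AccretiveSystem μ b δ C) (f : (Fin n → ℝ) → ℝ)
    {P : DyadicCube n} {s : Set (Fin n → ℝ)} (h : Disjoint P.toSet s) :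
    ∫ x in s, Esys μ b f P x ∂μ = 0 :=
  setIntegral_eq_zero_of_forall_eq_zero fun x hx => by
    simp [Esys, hb.supp P x (Set.disjoint_right.1 h hx)]

lemma setIntegral_Esys_of_subset (hb : AccretiveSystem μ b δ C) (f : (Fin n → ℝ) → ℝ)
    {P : DyadicCube n} (h0 : μ P.toSet ≠ 0) (htop : μ P.toSet ≠ ⊤) (hbP : avg μ (b P) P ≠ 0)
    {s : Set (Fin n → ℝ)} (hPs : P.toSet ⊆ s) :
    ∫ x in s, Esys μ b f P x ∂μ = ∫ x in P.toSet, f x ∂μ := by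
  rw [setIntegral_eq_integral_of_forall_compl_eq_zero fun x hx => by
      simp [Esys, hb.supp P x fun h => hx (hPs h)],
    ← setIntegral_eq_integral_of_forall_compl_eq_zero fun x hx => by simp [Esys, hb.supp P x hx]]
  simp only [Esys]
  rw [integral_const_mul, setIntegral_eq_avg_mul h0 htop (b P), setIntegral_eq_avg_mul h0 htop f]
  field_simp

lemma setIntegral_Dsys (hb : AccretiveSystem μ b δ C) (f : (Fin n → ℝ) → ℝ) (Q : DyadicCube n)
    {s : Set (Fin n → ℝ)} (hs : μ s ≠ ⊤) :
    ∫ x in s, Dsys μ b f Q x ∂μ =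
      ∑ ε, ∫ x in s, Esys μ b f (Q.child ε) x ∂μ - ∫ x in s, Esys μ b f Q x ∂μ := by
  unfold Dsys
  rw [integral_sub (integrable_finsetSum _ fun ε _ => hb.integrableOn_Esys f _ hs)
      (hb.integrableOn_Esys f Q hs),
    integral_finsetSum _ fun ε _ => hb.integrableOn_Esys f _ hs]

lemma setIntegral_Dsys_self (hb : AccretiveSystem μ b δ C) (hδ : 0 < δ)
    (hfin : ∀ Q : DyadicCube n, μ Q.toSet < ⊤) (hne : ∀ Q : DyadicCube n, μ Q.toSet ≠ 0)
    {f : (Fin n → ℝ) → ℝ} {Q : DyadicCube n} (hf : IntegrableOn f Q.toSet μ) :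
    ∫ x in Q.toSet, Dsys μ b f Q x ∂μ = 0 := by
  have hE : ∀ P : DyadicCube n, P.toSet ⊆ Q.toSet →
      ∫ x in Q.toSet, Esys μ b f P x ∂μ = ∫ x in P.toSet, f x ∂μ := fun P hP =>
    hb.setIntegral_Esys_of_subset f (hne P) (hfin P).ne
      (hb.avg_self_ne_zero hδ (hne P) (hfin P).ne) hP
  rw [hb.setIntegral_Dsys f Q (hfin Q).ne, Finset.sum_congr rfl fun ε _ => hE _ (Q.child_subset ε),
    hE Q subset_rfl, ← integral_iUnion_fintype (fun ε => (Q.child ε).measurableSet_toSet)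
      Q.pairwise_disjoint_child fun ε => hf.mono_set (Q.child_subset ε), Q.iUnion_child, sub_self]

lemma avg_Dsys_child (hb : AccretiveSystem μ b δ C) (hδ : 0 < δ)
    (hfin : ∀ Q : DyadicCube n, μ Q.toSet < ⊤) (hne : ∀ Q : DyadicCube n, μ Q.toSet ≠ 0)
    (f : (Fin n → ℝ) → ℝ) (Q : DyadicCube n) (ε : Fin n → Bool) :
    avg μ (Dsys μ b f Q) (Q.child ε) =
      avg μ f (Q.child ε) - avg μ f Q / avg μ (b Q) Q * avg μ (b Q) (Q.child ε) := by
  have hP := hb.avg_self_ne_zero hδ (hne (Q.child ε)) (hfin _).ne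
  have hint : ∫ x in (Q.child ε).toSet, Dsys μ b f Q x ∂μ =
      ∫ x in (Q.child ε).toSet, f x ∂μ - ∫ x in (Q.child ε).toSet, Esys μ b f Q x ∂μ := by
    rw [hb.setIntegral_Dsys f Q (hfin _).ne, Finset.sum_eq_single ε
      (fun ε' _ h => hb.setIntegral_Esys_of_disjoint f (Q.pairwise_disjoint_child h))
      (by simp), hb.setIntegral_Esys_of_subset f (hne _) (hfin _).ne hP subset_rfl]
  rw [avg_eq_div (hne _), hint, sub_div, ← avg_eq_div (hne _), ← avg_eq_div (hne _)]
  exact congrArg _ (avg_const_mul _ _)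

lemma Dsys_sub_Dsys_Dsys_apply (hb : AccretiveSystem μ b δ C) (hδ : 0 < δ)
    (hfin : ∀ Q : DyadicCube n, μ Q.toSet < ⊤) (hne : ∀ Q : DyadicCube n, μ Q.toSet ≠ 0)
    {f : (Fin n → ℝ) → ℝ} {Q : DyadicCube n} (hf : IntegrableOn f Q.toSet μ)
    (x : Fin n → ℝ) :
    Dsys μ b f Q x - Dsys μ b (Dsys μ b f Q) Q x = ∑ ε, errorTerm μ b f Q ε x := by
  have hDD : Dsys μ b (Dsys μ b f Q) Q x = ∑ ε, Esys μ b (Dsys μ b f Q) (Q.child ε) x := by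
    have hQ : avg μ (Dsys μ b f Q) Q = 0 := by
      rw [avg_eq_div (hne Q), hb.setIntegral_Dsys_self hδ hfin hne hf, zero_div]
    show _ - avg μ (Dsys μ b f Q) Q / avg μ (b Q) Q * b Q x = _
    rw [hQ, zero_div, zero_mul, sub_zero]
  have hchild : ∀ ε, Esys μ b f (Q.child ε) x - Esys μ b (Dsys μ b f Q) (Q.child ε) x =
      avg μ f Q / avg μ (b Q) Q *
        (avg μ (b Q) (Q.child ε) / avg μ (b (Q.child ε)) (Q.child ε)) * b (Q.child ε) x := by
    intro ε
    simp only [Esys]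
    rw [hb.avg_Dsys_child hδ hfin hne]
    ring
  have hbQ : b Q x = ∑ ε, (Q.child ε).toSet.indicator (b Q) x := by
    rw [Q.sum_indicator_child, hb.indicator_eq]
  calc Dsys μ b f Q x - Dsys μ b (Dsys μ b f Q) Q x
      = ∑ ε, (Esys μ b f (Q.child ε) x - Esys μ b (Dsys μ b f Q) (Q.child ε) x)
          - avg μ f Q / avg μ (b Q) Q * b Q x := by
        rw [hDD, Finset.sum_sub_distrib, Dsys, Esys]
        ring
    _ = ∑ ε, errorTerm μ b f Q ε x := by
        rw [hbQ, Finset.mul_sum, ← Finset.sum_sub_distrib]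
        refine Finset.sum_congr rfl fun ε _ => ?_
        rw [hchild ε, errorTerm]
        by_cases hx : x ∈ (Q.child ε).toSet
        · simp only [Set.indicator_of_mem hx]
          ring
        · simp [Set.indicator_of_notMem hx, hb.supp _ x hx]

lemma errorTerm_eq_zero_of_notMem_Sb (hb : AccretiveSystem μ b δ C) (hδ : 0 < δ)
    (hfin : ∀ Q : DyadicCube n, μ Q.toSet < ⊤) (hne : ∀ Q : DyadicCube n, μ Q.toSet ≠ 0)
    (f : (Fin n → ℝ) → ℝ) {Q : DyadicCube n} {ε : Fin n → Bool} (h : Q.child ε ∉ Sb b) :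
    errorTerm μ b f Q ε = 0 := by
  have hP : b (Q.child ε) = (Q.child ε).toSet.indicator (b Q) := by
    simpa [Sb, Q.parent_child] using h
  have havg : avg μ (b Q) (Q.child ε) = avg μ (b (Q.child ε)) (Q.child ε) :=
    avg_congr fun y hy => by rw [hP, Set.indicator_of_mem hy]
  unfold errorTerm
  rw [havg, div_self (hb.avg_self_ne_zero hδ (hne _) (hfin _).ne)]
  funext y
  exact Set.indicator_apply_eq_zero.2 fun hy => by
    rw [hP, Set.indicator_of_mem hy, one_mul, sub_self, mul_zero]

lemma eLpNorm_errorTerm_le (hb : AccretiveSystem μ b δ C) (hδ : 0 < δ) (hC : 0 ≤ C)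
    (hfin : ∀ Q : DyadicCube n, μ Q.toSet < ⊤) (hne : ∀ Q : DyadicCube n, μ Q.toSet ≠ 0)
    (f : (Fin n → ℝ) → ℝ) (Q : DyadicCube n) (ε : Fin n → Bool) :
    eLpNorm (errorTerm μ b f Q ε) 2 μ ≤
      ENNReal.ofReal (C * (C / δ + 1) / δ * |avg μ f Q|) * μ (Q.child ε).toSet ^ (1/2 : ℝ) := by
  have hA : |avg μ f Q / avg μ (b Q) Q| ≤ |avg μ f Q| / δ := by
    rw [abs_div]
    exact div_le_div_of_nonneg_left (abs_nonneg _) hδ (hb.le_abs_avg_self (hne Q) (hfin Q).ne)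
  have hr : |avg μ (b Q) (Q.child ε) / avg μ (b (Q.child ε)) (Q.child ε)| ≤ C / δ := by
    rw [abs_div]
    exact div_le_div₀ hC (hb.abs_avg_le hC Q (hfin _).ne) hδ
      (hb.le_abs_avg_self (hne _) (hfin _).ne)
  have h2 : ((2 : ℝ≥0∞).toReal)⁻¹ = 1 / 2 := by norm_num
  rw [← h2]
  refine eLpNorm_indicator_le_of_ae_bound (Q.child ε).measurableSet_toSet ?_
  filter_upwards [hb.ae_abs_le hC (Q.child ε), hb.ae_abs_le hC Q] with y hP hQ _
  calc _ = |avg μ f Q / avg μ (b Q) Q| *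
        |avg μ (b Q) (Q.child ε) / avg μ (b (Q.child ε)) (Q.child ε) * b (Q.child ε) y - b Q y| :=
        abs_mul _ _
    _ ≤ |avg μ f Q| / δ * (C / δ * C + C) := by
        refine mul_le_mul hA ((abs_sub _ _).trans (add_le_add ?_ hQ)) (abs_nonneg _)
          (by positivity)
        rw [abs_mul]
        exact mul_le_mul hr hP (abs_nonneg _) (by positivity)
    _ = C * (C / δ + 1) / δ * |avg μ f Q| := by ring

end AccretiveSystem

open Classical in
/-- The error formula `Δ^μ_Q f − (Δ^μ_Q)² f = ∑_{P ∈ ch Q ∩ 𝒮_b} φ^μ_P`, where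
`φ^μ_P = (⟨f⟩_Q/⟨b_Q⟩_Q)((⟨b_Q⟩_P/⟨b_P⟩_P) b_P − b_Q) 1_P`, together with the bound
`‖φ^μ_P‖_{L²(μ)} ≤ C |⟨f⟩^μ_Q| μ(P)^{1/2}`. -/
theorem error_formula (δ Cb : ℝ) (hδ : 0 < δ) (hCb : 0 < Cb) :
    ∃ C : ℝ, 0 < C ∧
      ∀ (n : ℕ) (μ : Measure (Fin n → ℝ)),
        (∀ Q : DyadicCube n, μ Q.toSet < ⊤) →
        (∀ Q : DyadicCube n, μ Q.toSet ≠ 0) →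
        ∀ b : DyadicCube n → (Fin n → ℝ) → ℝ, AccretiveSystem μ b δ Cb →
        ∀ f : (Fin n → ℝ) → ℝ, MemLp f 2 μ → ∀ Q : DyadicCube n,
          (∀ x, Dsys μ b f Q x - Dsys μ b (Dsys μ b f Q) Q x
              = ∑ ε : Fin n → Bool,
                  if Q.child ε ∈ Sb b then
                    (Q.child ε).toSet.indicator
                      (fun y => (avg μ f Q / avg μ (b Q) Q) *
                        ((avg μ (b Q) (Q.child ε) / avg μ (b (Q.child ε)) (Q.child ε))
                            * b (Q.child ε) y - b Q y)) x
                  else 0) ∧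
          ∀ ε : Fin n → Bool, Q.child ε ∈ Sb b →
            eLpNorm ((Q.child ε).toSet.indicator
                (fun y => (avg μ f Q / avg μ (b Q) Q) *
                  ((avg μ (b Q) (Q.child ε) / avg μ (b (Q.child ε)) (Q.child ε))
                      * b (Q.child ε) y - b Q y))) 2 μ
              ≤ ENNReal.ofReal (C * |avg μ f Q|) * μ (Q.child ε).toSet ^ (1/2 : ℝ) := by
  refine ⟨Cb * (Cb / δ + 1) / δ, by positivity, fun n μ hfin hne b hb f hf Q => ⟨fun x => ?_,
    fun ε _ => hb.eLpNorm_errorTerm_le hδ hCb.le hfin hne f Q ε⟩⟩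
  have hfQ := hf.integrableOn_of_measure_ne_top one_le_two (hfin Q).ne
  rw [hb.Dsys_sub_Dsys_Dsys_apply hδ hfin hne hfQ]
  refine Finset.sum_congr rfl fun ε _ => ?_
  split_ifs with h
  · rfl
  · rw [hb.errorTerm_eq_zero_of_notMem_Sb hδ hfin hne f h, Pi.zero_apply]
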